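/- There exist constants C > 0 and α > 0, depending only on n, with the following property. Let a be a (1,∞)-atom supported in a parabolic ball Q = B̃((t₀,x₀),r) contained in X = (0,∞) × ℝⁿ. Then for every integer j ≥ 2 and every (t,x) ∈ X with 2^j r ≤ d̃((t,x),(t₀,x₀)) < 2^{j+1} r, the integral Ta(t,x) = ∫_0^t ∫_{ℝⁿ} (∂_τ p_τ)|_{τ = t−s}(x−y) a(s,y) dy ds converges absolutely and satisfies |Ta(t,x)| ≤ C 2^{−jα} (2^j r)^{−(n+2)}. -/

import Mathlib

open MeasureTheory Metric Filter Set

noncomputable section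

/-- The Gauss–Weierstrass heat kernel `p_t(z) = (4πt)^{−n/2} exp(−|z|²/(4t))` on `ℝⁿ`. -/
def heatKernel (n : ℕ) (t : ℝ) (z : EuclideanSpace ℝ (Fin n)) : ℝ :=
  (4 * Real.pi * t) ^ (-(n : ℝ) / 2) * Real.exp (-‖z‖ ^ 2 / (4 * t))

/-- The parabolic quasi-distance on `N = ℝ × ℝⁿ`. -/
def pdist {n : ℕ} (p q : ℝ × EuclideanSpace ℝ (Fin n)) : ℝ :=
  max (Real.sqrt |p.1 - q.1|) (dist p.2 q.2)

/-- The open parabolic ball in `N = ℝ × ℝⁿ`. -/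
def pball {n : ℕ} (c : ℝ × EuclideanSpace ℝ (Fin n)) (r : ℝ) :
    Set (ℝ × EuclideanSpace ℝ (Fin n)) :=
  {p | pdist p c < r}

/-- The half-space `X = (0,∞) × ℝⁿ`. -/
def Xset (n : ℕ) : Set (ℝ × EuclideanSpace ℝ (Fin n)) := {p | 0 < p.1}

/-- A `(1,∞)`-atom supported in the parabolic ball `pball c r ⊆ X`. -/
def IsAtom1Inf (n : ℕ) (a : ℝ × EuclideanSpace ℝ (Fin n) → ℝ)
    (c : ℝ × EuclideanSpace ℝ (Fin n)) (r : ℝ) : Prop :=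
  0 < r ∧ Function.support a ⊆ pball c r ∧ pball c r ⊆ Xset n ∧
    Integrable a volume ∧ (∫ p, a p) = 0 ∧
    eLpNorm a ⊤ volume ≤ (volume (pball c r))⁻¹

/-!
Write `K(τ, z) = ∂_τ p_τ(z)` and `ρ = max(√τ, |z|)`. `K` and its derivatives in `τ` and in
`q = |z|²` are Gaussians times polynomials in `1/τ` and `|z|²/τ²`; as the Gaussian absorbs any
power of `|z|/√τ`, `|K| ≲ τ ρ^{-(n+4)}`, `|∂_τ K| ≲ ρ^{-(n+4)}` and `|∇_z K| ≲ ρ^{-(n+3)}`.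

Let `δ = d̃((t,x),(t₀,x₀)) ≥ 2^j r`; every point of `Q` is at parabolic distance `≥ δ/2` from
`(t,x)`. If `t < t₀ + r²`, the time lag `t - s` is below `2r²` on `Q`, and the size estimate
alone gives `|Ta(t,x)| ≲ r² δ^{-(n+4)}`. Otherwise `Q` lies in the past of `t`, and since `a` has
mean zero we may subtract from `K(t - s, x - y)` its value at the bottom centre `(t₀ - r², x₀)`
of `Q`; the mean value theorem, in time and then along a segment in space, bounds the difference
by `r δ^{-(n+3)}`. Both bounds are `≲ 2^{-j} (2^j r)^{-(n+2)}`, so `α = 1` works.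
-/

lemma sqrt_add_le_sqrt_add_sqrt {x y : ℝ} (hx : 0 ≤ x) (hy : 0 ≤ y) :
    √(x + y) ≤ √x + √y :=
  (Real.sqrt_le_left (by positivity)).2 <| by
    nlinarith [Real.sq_sqrt hx, Real.sq_sqrt hy,
      mul_nonneg (Real.sqrt_nonneg x) (Real.sqrt_nonneg y)]

lemma div_pow_le_of_half_le {C δ ρ : ℝ} (hC : 0 ≤ C) (hδ : 0 < δ) (h : δ / 2 ≤ ρ) (m : ℕ) :
    C / ρ ^ m ≤ 2 ^ m * C / δ ^ m := calc
  C / ρ ^ m ≤ C / (δ / 2) ^ m := by gcongr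
  _ = 2 ^ m * C / δ ^ m := by rw [div_pow]; field_simp

lemma mul_sq_div_pow_succ_le {K r δ : ℝ} (hK : 0 ≤ K) (hr : 0 ≤ r) (hδ : 0 < δ)
    (hrδ : 2 * r ≤ δ) (m : ℕ) : K * (2 * r ^ 2) / δ ^ (m + 1) ≤ K * r / δ ^ m := calc
  K * (2 * r ^ 2) / δ ^ (m + 1) = K * r / δ ^ m * (2 * r / δ) := by field_simp; ring
  _ ≤ K * r / δ ^ m := mul_le_of_le_one_right (by positivity) ((div_le_one hδ).2 hrδ)

section Parabolic

variable {n : ℕ}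

lemma pdist_triangle (p m q : ℝ × EuclideanSpace ℝ (Fin n)) :
    pdist p q ≤ pdist p m + pdist m q := by
  refine max_le ?_ ?_
  · calc √|p.1 - q.1| ≤ √(|p.1 - m.1| + |m.1 - q.1|) := Real.sqrt_le_sqrt (abs_sub_le _ _ _)
      _ ≤ √|p.1 - m.1| + √|m.1 - q.1| :=
          sqrt_add_le_sqrt_add_sqrt (abs_nonneg _) (abs_nonneg _)
      _ ≤ pdist p m + pdist m q := add_le_add (le_max_left _ _) (le_max_left _ _)
  · calc dist p.2 q.2 ≤ dist p.2 m.2 + dist m.2 q.2 := dist_triangle _ _ _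
      _ ≤ pdist p m + pdist m q := add_le_add (le_max_right _ _) (le_max_right _ _)

lemma pdist_eq_of_le {p q : ℝ × EuclideanSpace ℝ (Fin n)} (h : q.1 ≤ p.1) :
    pdist p q = max √(p.1 - q.1) ‖p.2 - q.2‖ := by
  rw [pdist, abs_of_nonneg (sub_nonneg.2 h), dist_eq_norm]

lemma half_le_pdist_of_pdist_le {p q c : ℝ × EuclideanSpace ℝ (Fin n)} {r : ℝ}
    (hq : pdist q c ≤ r) (hp : 2 * r ≤ pdist p c) : pdist p c / 2 ≤ pdist p q := by
  linarith [pdist_triangle p q c]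

lemma half_le_max_sqrt_norm_of_pdist_le {t : ℝ} {x : EuclideanSpace ℝ (Fin n)}
    {q c : ℝ × EuclideanSpace ℝ (Fin n)} {r : ℝ} (hq : pdist q c ≤ r)
    (hδ : 2 * r ≤ pdist (t, x) c) (hqt : q.1 ≤ t) :
    pdist (t, x) c / 2 ≤ max √(t - q.1) ‖x - q.2‖ := by
  rw [← pdist_eq_of_le (p := (t, x)) hqt]
  exact half_le_pdist_of_pdist_le hq hδ

lemma pdist_le_of_abs_le {p c : ℝ × EuclideanSpace ℝ (Fin n)} {r : ℝ} (hr : 0 ≤ r)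
    (h₁ : |p.1 - c.1| ≤ r ^ 2) (h₂ : dist p.2 c.2 ≤ r) : pdist p c ≤ r :=
  max_le ((Real.sqrt_le_sqrt h₁).trans (Real.sqrt_sq hr).le) h₂

lemma pball_eq_prod (c : ℝ × EuclideanSpace ℝ (Fin n)) (r : ℝ) :
    pball c r = Ioo (c.1 - r ^ 2) (c.1 + r ^ 2) ×ˢ ball c.2 r := by
  ext p
  simp only [pball, pdist, mem_ofPred_eq, mem_prod, mem_Ioo, mem_ball, max_lt_iff]
  refine and_congr_left fun hpr => ?_
  rw [Real.sqrt_lt' (dist_nonneg.trans_lt hpr), abs_lt]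
  constructor <;> rintro ⟨h₁, h₂⟩ <;> constructor <;> linarith

lemma volume_pball_pos (c : ℝ × EuclideanSpace ℝ (Fin n)) {r : ℝ} (hr : 0 < r) :
    0 < volume (pball c r) := by
  rw [pball_eq_prod, Measure.volume_eq_prod, Measure.prod_prod, Real.volume_Ioo]
  exact ENNReal.mul_pos (by simpa using hr.ne') (measure_ball_pos volume c.2 hr).ne'

lemma volume_pball_ne_top (c : ℝ × EuclideanSpace ℝ (Fin n)) (r : ℝ) :
    volume (pball c r) ≠ ⊤ := by
  rw [pball_eq_prod, Measure.volume_eq_prod, Measure.prod_prod, Real.volume_Ioo]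
  exact ENNReal.mul_ne_top ENNReal.ofReal_ne_top measure_ball_lt_top.ne

lemma IsAtom1Inf.integral_abs_le_one {a : ℝ × EuclideanSpace ℝ (Fin n) → ℝ}
    {c : ℝ × EuclideanSpace ℝ (Fin n)} {r : ℝ} (ha : IsAtom1Inf n a c r) : ∫ p, |a p| ≤ 1 := by
  obtain ⟨hr, hsupp, -, hint, -, hsup⟩ := ha
  have hL1 : eLpNorm a 1 volume ≤ 1 := calc
    eLpNorm a 1 volume = eLpNorm a 1 (volume.restrict (pball c r)) :=
      (eLpNorm_restrict_eq_of_support_subset hsupp).symm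
    _ ≤ eLpNorm a ⊤ (volume.restrict (pball c r)) * volume (pball c r) := by
      simpa using eLpNorm_le_eLpNorm_mul_rpow_measure_univ (p := 1) le_top hint.1.restrict
    _ ≤ (volume (pball c r))⁻¹ * volume (pball c r) := by
      rw [eLpNorm_restrict_eq_of_support_subset hsupp]; gcongr
    _ = 1 := ENNReal.inv_mul_cancel (volume_pball_pos c hr).ne' (volume_pball_ne_top c r)
  simp_rw [← Real.norm_eq_abs]
  rw [integral_norm_eq_lintegral_enorm hint.1, ← eLpNorm_one_eq_lintegral_enorm]
  exact ENNReal.toReal_le_of_le_ofReal zero_le_one (by simpa using hL1)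

end Parabolic

section HeatProfile

open Real
open scoped Nat

lemma pow_mul_exp_neg_le_factorial {x : ℝ} (hx : 0 ≤ x) (k : ℕ) :
    x ^ k * exp (-x) ≤ k ! := by
  have := pow_div_factorial_le_exp x hx k
  rw [div_le_iff₀ (by positivity)] at this
  rw [exp_neg, ← div_eq_mul_inv, div_le_iff₀ (exp_pos x)]
  linarith

variable (n : ℕ)

/- The heat kernel as a function of `τ` and `q = |z|²`, its logarithmic `τ`-derivative, and
`∂_τ p`, `∂_τ² p`, `∂_q ∂_τ p`. -/
def heatProfile (τ q : ℝ) : ℝ :=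
  (4 * π * τ) ^ (-(n : ℝ) / 2) * exp (-q / (4 * τ))

def heatLogDeriv (τ q : ℝ) : ℝ :=
  -(n : ℝ) / (2 * τ) + q / (4 * τ ^ 2)

def heatProfileDt (τ q : ℝ) : ℝ :=
  heatProfile n τ q * heatLogDeriv n τ q

def heatProfileDtt (τ q : ℝ) : ℝ :=
  heatProfile n τ q * (heatLogDeriv n τ q ^ 2 + n / (2 * τ ^ 2) - q / (2 * τ ^ 3))

def heatProfileDtq (τ q : ℝ) : ℝ :=
  heatProfile n τ q * (heatLogDeriv n τ q * (-1 / (4 * τ)) + 1 / (4 * τ ^ 2))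

variable {n}

lemma heatKernel_eq_heatProfile (τ : ℝ) (z : EuclideanSpace ℝ (Fin n)) :
    heatKernel n τ z = heatProfile n τ (‖z‖ ^ 2) := by
  rw [heatKernel, heatProfile, neg_div]

lemma hasDerivAt_heatProfile_fst (q : ℝ) {τ : ℝ} (hτ : 0 < τ) :
    HasDerivAt (heatProfile n · q) (heatProfileDt n τ q) τ := by
  have h4πτ : 0 < 4 * π * τ := by positivity
  have hpow : HasDerivAt (fun τ => (4 * π * τ) ^ (-(n : ℝ) / 2))
      (4 * π * (-(n : ℝ) / 2) * (4 * π * τ) ^ (-(n : ℝ) / 2 - 1)) τ :=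
    ((hasDerivAt_id' τ).const_mul (4 * π)).rpow_const (Or.inl h4πτ.ne') |>.congr_deriv (by ring)
  have hexp : HasDerivAt (fun τ => exp (-q / (4 * τ)))
      (exp (-q / (4 * τ)) * (q / (4 * τ ^ 2))) τ :=
    ((hasDerivAt_const τ (-q)).fun_div ((hasDerivAt_id' τ).const_mul 4) (by positivity)).exp
      |>.congr_deriv (by field_simp; ring)
  refine (hpow.mul hexp).congr_deriv ?_
  rw [heatProfileDt, heatProfile, heatLogDeriv, Real.rpow_sub_one h4πτ.ne']
  field_simp

lemma hasDerivAt_heatProfile_snd (τ q : ℝ) :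
    HasDerivAt (heatProfile n τ ·) (heatProfile n τ q * (-1 / (4 * τ))) q :=
  ((hasDerivAt_id' q).fun_neg.div_const (4 * τ)).exp.const_mul ((4 * π * τ) ^ (-(n : ℝ) / 2))
    |>.congr_deriv (by rw [heatProfile]; ring)

lemma hasDerivAt_heatLogDeriv_fst (q : ℝ) {τ : ℝ} (hτ : τ ≠ 0) :
    HasDerivAt (heatLogDeriv n · q) (n / (2 * τ ^ 2) - q / (2 * τ ^ 3)) τ := by
  have h₁ := (hasDerivAt_const τ (-(n : ℝ))).fun_div ((hasDerivAt_id' τ).const_mul 2) (by simpa)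
  have h₂ := (hasDerivAt_const τ q).fun_div ((hasDerivAt_pow 2 τ).const_mul 4) (by simpa)
  refine (h₁.add h₂).congr_deriv ?_
  field_simp
  ring

lemma hasDerivAt_heatLogDeriv_snd (τ q : ℝ) :
    HasDerivAt (heatLogDeriv n τ ·) (1 / (4 * τ ^ 2)) q :=
  ((hasDerivAt_id' q).div_const (4 * τ ^ 2)).const_add (-(n : ℝ) / (2 * τ))

lemma hasDerivAt_heatProfileDt_fst (q : ℝ) {τ : ℝ} (hτ : 0 < τ) :
    HasDerivAt (heatProfileDt n · q) (heatProfileDtt n τ q) τ := by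
  refine ((hasDerivAt_heatProfile_fst q hτ).mul
    (hasDerivAt_heatLogDeriv_fst q hτ.ne')).congr_deriv ?_
  rw [heatProfileDtt, heatProfileDt]
  ring

lemma hasDerivAt_heatProfileDt_snd (τ q : ℝ) :
    HasDerivAt (heatProfileDt n τ ·) (heatProfileDtq n τ q) q := by
  refine ((hasDerivAt_heatProfile_snd τ q).mul
    (hasDerivAt_heatLogDeriv_snd τ q)).congr_deriv ?_
  rw [heatProfileDtq]
  ring

lemma deriv_heatKernel (z : EuclideanSpace ℝ (Fin n)) {τ : ℝ} (hτ : 0 < τ) :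
    deriv (heatKernel n · z) τ = heatProfileDt n τ (‖z‖ ^ 2) := by
  simp_rw [heatKernel_eq_heatProfile]
  exact (hasDerivAt_heatProfile_fst _ hτ).deriv

lemma measurable_heatProfileDt : Measurable fun p : ℝ × ℝ => heatProfileDt n p.1 p.2 := by
  unfold heatProfileDt heatProfile heatLogDeriv
  fun_prop

lemma heatProfile_sq_eq {τ : ℝ} (hτ : 0 < τ) (w : ℝ) :
    heatProfile n τ (w ^ 2)
      = (4 * π) ^ (-(n : ℝ) / 2) * (√τ ^ n)⁻¹ * exp (-(w ^ 2 / τ) / 4) := by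
  rw [heatProfile, mul_rpow (by positivity) hτ.le, neg_div, rpow_neg hτ.le,
    rpow_div_two_eq_sqrt _ hτ.le, rpow_natCast]
  congr 2
  field_simp

variable (n)

lemma exists_heatProfile_mul_le : ∃ C > 0, ∀ τ > 0, ∀ w ≥ 0,
    heatProfile n τ (w ^ 2) * (1 / τ + w ^ 2 / τ ^ 2) ^ 2 ≤ C / max √τ w ^ (n + 4) := by
  refine ⟨(4 * π) ^ (-(n : ℝ) / 2) * (4 ^ (n + 6) * (n + 6)! * exp (1 / 4)), by positivity, ?_⟩
  intro τ hτ w hw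
  -- in the scaled variables `s = √τ`, `u = w² / τ` everything reduces to `(1 + u)^k e^{-u/4} ≲ 1`
  set s := √τ with hs
  set u := w ^ 2 / τ with hu
  have hs0 : 0 < s := sqrt_pos.2 hτ
  have hτs : τ = s ^ 2 := (sq_sqrt hτ.le).symm
  have hu0 : 0 ≤ u := by positivity
  have hρ : max s w ≤ s * (1 + u) := by
    have h : s * (1 + u) = s + w ^ 2 / s := by rw [hu, hτs]; field_simp
    refine max_le (le_mul_of_one_le_right hs0.le (by linarith)) ?_
    rw [h, ← sub_le_iff_le_add', le_div_iff₀ hs0]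
    nlinarith [sq_nonneg (s - w)]
  have hscalar : (1 + u) ^ (n + 6) * exp (-u / 4) ≤ 4 ^ (n + 6) * (n + 6)! * exp (1 / 4) := calc
    (1 + u) ^ (n + 6) * exp (-u / 4)
      = 4 ^ (n + 6) * exp (1 / 4) * (((1 + u) / 4) ^ (n + 6) * exp (-((1 + u) / 4))) := by
        rw [div_pow, show -((1 + u) / 4) = -u / 4 + -(1 / 4) by ring, exp_add, exp_neg]
        field_simp
    _ ≤ 4 ^ (n + 6) * exp (1 / 4) * (n + 6)! := by
        gcongr
        exact pow_mul_exp_neg_le_factorial (by positivity) _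
    _ = 4 ^ (n + 6) * (n + 6)! * exp (1 / 4) := by ring
  have hA : 1 / τ + w ^ 2 / τ ^ 2 = (1 + u) / s ^ 2 := by rw [hu, hτs]; field_simp
  rw [le_div_iff₀ (by positivity), heatProfile_sq_eq hτ, ← hs, ← hu, hA]
  calc (4 * π) ^ (-(n : ℝ) / 2) * (s ^ n)⁻¹ * exp (-u / 4) * ((1 + u) / s ^ 2) ^ 2
        * max s w ^ (n + 4)
      = (4 * π) ^ (-(n : ℝ) / 2) * (exp (-u / 4) * (1 + u) ^ 2 * (max s w / s) ^ (n + 4)) := by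
        rw [div_pow, div_pow]
        field_simp
        ring
    _ ≤ (4 * π) ^ (-(n : ℝ) / 2) * (exp (-u / 4) * (1 + u) ^ 2 * (1 + u) ^ (n + 4)) := by
        gcongr
        rwa [div_le_iff₀ hs0, mul_comm]
    _ = (4 * π) ^ (-(n : ℝ) / 2) * ((1 + u) ^ (n + 6) * exp (-u / 4)) := by ring
    _ ≤ _ := by gcongr

lemma exists_abs_heatProfile_mul_le {Q : ℝ → ℝ → ℝ} {c : ℝ} (hc : 0 < c)
    (hQ : ∀ A ≥ 0, ∀ B ≥ 0, |Q A B| ≤ c * (A + B) ^ 2) :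
    ∃ C > 0, ∀ τ > 0, ∀ w ≥ 0,
      |heatProfile n τ (w ^ 2) * Q (1 / τ) (w ^ 2 / τ ^ 2)| ≤ C / max √τ w ^ (n + 4) := by
  obtain ⟨C, hC, hbound⟩ := exists_heatProfile_mul_le n
  refine ⟨c * C, by positivity, fun τ hτ w hw => ?_⟩
  have hG : 0 ≤ heatProfile n τ (w ^ 2) := by rw [heatProfile]; positivity
  calc |heatProfile n τ (w ^ 2) * Q (1 / τ) (w ^ 2 / τ ^ 2)|
      ≤ heatProfile n τ (w ^ 2) * (c * (1 / τ + w ^ 2 / τ ^ 2) ^ 2) := by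
        rw [abs_mul, abs_of_nonneg hG]
        exact mul_le_mul_of_nonneg_left (hQ _ (by positivity) _ (by positivity)) hG
    _ = c * (heatProfile n τ (w ^ 2) * (1 / τ + w ^ 2 / τ ^ 2) ^ 2) := by ring
    _ ≤ c * (C / max √τ w ^ (n + 4)) := by gcongr; exact hbound τ hτ w hw
    _ = c * C / max √τ w ^ (n + 4) := by ring

lemma exists_abs_heatProfileDt_le :
    ∃ C > 0, ∀ τ > 0, ∀ w ≥ 0, |heatProfileDt n τ (w ^ 2)| ≤ C * τ / max √τ w ^ (n + 4) := by
  obtain ⟨C, hC, hbound⟩ := exists_abs_heatProfile_mul_le n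
    (Q := fun A B => (-(n / 2) * A + B / 4) * A) (c := n + 1) (by positivity)
    fun A hA B hB => by
      have hn : (0 : ℝ) ≤ n := n.cast_nonneg
      rw [abs_le]
      constructor <;> nlinarith [mul_nonneg hA hB, mul_nonneg hn (mul_nonneg hA hB),
        mul_nonneg hn (sq_nonneg A), mul_nonneg hn (sq_nonneg B)]
  refine ⟨C, hC, fun τ hτ w hw => ?_⟩
  have h : heatProfileDt n τ (w ^ 2) = τ * (heatProfile n τ (w ^ 2)
      * ((-(n / 2) * (1 / τ) + w ^ 2 / τ ^ 2 / 4) * (1 / τ))) := by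
    rw [heatProfileDt, heatLogDeriv]
    field_simp
  rw [h, abs_mul, abs_of_pos hτ, mul_comm C, mul_div_assoc]
  exact mul_le_mul_of_nonneg_left (hbound τ hτ w hw) hτ.le

lemma exists_abs_heatProfileDtt_le :
    ∃ C > 0, ∀ τ > 0, ∀ w ≥ 0, |heatProfileDtt n τ (w ^ 2)| ≤ C / max √τ w ^ (n + 4) := by
  obtain ⟨C, hC, hbound⟩ := exists_abs_heatProfile_mul_le n
    (Q := fun A B => (-(n / 2) * A + B / 4) ^ 2 + n / 2 * A ^ 2 - A * B / 2)
    (c := (n + 2) ^ 2) (by positivity) fun A hA B hB => by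
      have hn : (0 : ℝ) ≤ n := n.cast_nonneg
      rw [abs_le]
      constructor <;> nlinarith [mul_nonneg hA hB, mul_nonneg hn (mul_nonneg hA hB),
        mul_nonneg hn (sq_nonneg A), mul_nonneg hn (sq_nonneg B)]
  refine ⟨C, hC, fun τ hτ w hw => ?_⟩
  convert hbound τ hτ w hw using 2
  rw [heatProfileDtt, heatLogDeriv]
  ring

lemma exists_abs_heatProfileDtq_le :
    ∃ C > 0, ∀ τ > 0, ∀ w ≥ 0, |heatProfileDtq n τ (w ^ 2)| ≤ C / max √τ w ^ (n + 4) := by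
  obtain ⟨C, hC, hbound⟩ := exists_abs_heatProfile_mul_le n
    (Q := fun A B => (-(n / 2) * A + B / 4) * (-A / 4) + A ^ 2 / 4) (c := n + 2)
    (by positivity) fun A hA B hB => by
      have hn : (0 : ℝ) ≤ n := n.cast_nonneg
      rw [abs_le]
      constructor <;> nlinarith [mul_nonneg hA hB, mul_nonneg hn (mul_nonneg hA hB),
        mul_nonneg hn (sq_nonneg A), mul_nonneg hn (sq_nonneg B)]
  refine ⟨C, hC, fun τ hτ w hw => ?_⟩
  convert hbound τ hτ w hw using 2
  rw [heatProfileDtq, heatLogDeriv]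
  ring

end HeatProfile

section Estimates

variable (n : ℕ)

lemma exists_abs_heatProfileDt_le_of_mem_pball : ∃ C > 0, ∀ (t : ℝ)
    (x : EuclideanSpace ℝ (Fin n)) (c q : ℝ × EuclideanSpace ℝ (Fin n)) (r : ℝ),
    2 * r ≤ pdist (t, x) c → q ∈ pball c r → q.1 < t → t < c.1 + r ^ 2 →
    |heatProfileDt n (t - q.1) (‖x - q.2‖ ^ 2)| ≤ C * r / pdist (t, x) c ^ (n + 3) := by
  obtain ⟨C, hC, hDt⟩ := exists_abs_heatProfileDt_le n
  refine ⟨2 ^ (n + 4) * C, by positivity, fun t x c q r hδ hq hqt htc => ?_⟩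
  set δ := pdist (t, x) c
  rw [pball_eq_prod] at hq
  obtain ⟨⟨hq₁, -⟩, hq₂⟩ := hq
  have hr : 0 < r := dist_nonneg.trans_lt hq₂
  have hδ0 : 0 < δ := by linarith
  have hq : pdist q c ≤ r := pdist_le_of_abs_le hr.le (abs_le.2 ⟨by linarith, by linarith⟩) hq₂.le
  calc |heatProfileDt n (t - q.1) (‖x - q.2‖ ^ 2)|
      ≤ C * (t - q.1) / max √(t - q.1) ‖x - q.2‖ ^ (n + 4) :=
        hDt _ (sub_pos.2 hqt) _ (norm_nonneg _)
    _ ≤ 2 ^ (n + 4) * (C * (t - q.1)) / δ ^ (n + 4) :=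
        div_pow_le_of_half_le (by nlinarith) hδ0 (half_le_max_sqrt_norm_of_pdist_le hq hδ hqt.le) _
    _ ≤ 2 ^ (n + 4) * C * (2 * r ^ 2) / δ ^ (n + 3 + 1) := by
        rw [mul_assoc]; gcongr; linarith
    _ ≤ 2 ^ (n + 4) * C * r / δ ^ (n + 3) :=
        mul_sq_div_pow_succ_le (by positivity) hr.le (by linarith) hδ _

lemma exists_abs_heatProfileDt_sub_time_le : ∃ C > 0, ∀ (t : ℝ)
    (x : EuclideanSpace ℝ (Fin n)) (c p : ℝ × EuclideanSpace ℝ (Fin n)) (r : ℝ),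
    2 * r ≤ pdist (t, x) c → p ∈ pball c r → c.1 + r ^ 2 ≤ t →
    |heatProfileDt n (t - p.1) (‖x - p.2‖ ^ 2)
        - heatProfileDt n (t - (c.1 - r ^ 2)) (‖x - p.2‖ ^ 2)|
      ≤ C * r / pdist (t, x) c ^ (n + 3) := by
  obtain ⟨C, hC, hDtt⟩ := exists_abs_heatProfileDtt_le n
  refine ⟨2 ^ (n + 4) * C, by positivity, fun t x c p r hδ hp htc => ?_⟩
  set δ := pdist (t, x) c
  rw [pball_eq_prod] at hp
  obtain ⟨⟨hp₁, hp₂⟩, hp₃⟩ := hp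
  have hr : 0 < r := dist_nonneg.trans_lt hp₃
  have hδ0 : 0 < δ := by linarith
  have hf : ∀ u ∈ Icc (c.1 - r ^ 2) p.1,
      HasDerivAt (fun u => heatProfileDt n (t - u) (‖x - p.2‖ ^ 2))
        (-heatProfileDtt n (t - u) (‖x - p.2‖ ^ 2)) u := fun u hu => by
    simpa [Function.comp_def] using (hasDerivAt_heatProfileDt_fst (n := n) (‖x - p.2‖ ^ 2)
      (by linarith [hu.2] : 0 < t - u)).comp u ((hasDerivAt_id' u).const_sub t)
  have hf' : ∀ u ∈ Icc (c.1 - r ^ 2) p.1,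
      ‖-heatProfileDtt n (t - u) (‖x - p.2‖ ^ 2)‖ ≤ 2 ^ (n + 4) * C / δ ^ (n + 4) :=
    fun u hu => by
      have hu' : pdist (u, p.2) c ≤ r :=
        pdist_le_of_abs_le hr.le (abs_le.2 ⟨by linarith [hu.1], by linarith [hu.2]⟩) hp₃.le
      rw [norm_neg, Real.norm_eq_abs]
      exact (hDtt _ (by linarith [hu.2]) _ (norm_nonneg _)).trans <| div_pow_le_of_half_le hC.le
        hδ0 (half_le_max_sqrt_norm_of_pdist_le hu' hδ (by linarith [hu.2])) _
  have hmvt := norm_image_sub_le_of_norm_deriv_le_segment'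
    (fun u hu => (hf u hu).hasDerivWithinAt) (fun u hu => hf' u (Ico_subset_Icc_self hu))
    p.1 ⟨hp₁.le, le_rfl⟩
  rw [Real.norm_eq_abs] at hmvt
  calc _ ≤ 2 ^ (n + 4) * C / δ ^ (n + 4) * (p.1 - (c.1 - r ^ 2)) := hmvt
    _ ≤ 2 ^ (n + 4) * C * (2 * r ^ 2) / δ ^ (n + 3 + 1) := by
        rw [div_mul_eq_mul_div]; gcongr; linarith
    _ ≤ 2 ^ (n + 4) * C * r / δ ^ (n + 3) :=
        mul_sq_div_pow_succ_le (by positivity) hr.le (by linarith) hδ _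

lemma exists_abs_heatProfileDt_sub_space_le : ∃ C > 0, ∀ (t : ℝ)
    (x : EuclideanSpace ℝ (Fin n)) (c : ℝ × EuclideanSpace ℝ (Fin n))
    (y : EuclideanSpace ℝ (Fin n)) (r : ℝ),
    2 * r ≤ pdist (t, x) c → y ∈ ball c.2 r → c.1 + r ^ 2 ≤ t →
    |heatProfileDt n (t - (c.1 - r ^ 2)) (‖x - y‖ ^ 2)
        - heatProfileDt n (t - (c.1 - r ^ 2)) (‖x - c.2‖ ^ 2)|
      ≤ C * r / pdist (t, x) c ^ (n + 3) := by
  obtain ⟨C, hC, hDtq⟩ := exists_abs_heatProfileDtq_le n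
  refine ⟨2 ^ (n + 4) * C, by positivity, fun t x c y r hδ hy htc => ?_⟩
  set δ := pdist (t, x) c
  set τ := t - (c.1 - r ^ 2)
  set v := y - c.2
  set z := fun θ : ℝ => x - (c.2 + θ • v)
  have hr : 0 < r := dist_nonneg.trans_lt hy
  have hτ : 0 < τ := by nlinarith
  have hv : ‖v‖ ≤ r := by rw [← dist_eq_norm]; exact (mem_ball.1 hy).le
  have hf : ∀ θ ∈ Icc (0 : ℝ) 1, HasDerivAt (fun θ => heatProfileDt n τ (‖z θ‖ ^ 2))
      (heatProfileDtq n τ (‖z θ‖ ^ 2) * (2 * inner ℝ (z θ) (-v))) θ := fun θ _ => by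
    refine (hasDerivAt_heatProfileDt_snd τ _).comp θ ?_
    simpa using ((((hasDerivAt_id' θ).smul_const v).const_add c.2).const_sub x).norm_sq
  have hf' : ∀ θ ∈ Icc (0 : ℝ) 1, ‖heatProfileDtq n τ (‖z θ‖ ^ 2) * (2 * inner ℝ (z θ) (-v))‖
      ≤ 2 ^ (n + 4) * C * r / δ ^ (n + 3) := fun θ hθ => by
    have hθv : dist (c.2 + θ • v) c.2 ≤ r := by
      rw [dist_eq_norm, add_sub_cancel_left, norm_smul, Real.norm_eq_abs, abs_of_nonneg hθ.1]
      nlinarith [norm_nonneg v, hθ.2]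
    have hρ : δ / 2 ≤ max √τ ‖z θ‖ := half_le_max_sqrt_norm_of_pdist_le
      (q := (c.1 - r ^ 2, c.2 + θ • v)) (pdist_le_of_abs_le hr.le (by simp) hθv) hδ
      (by dsimp only; nlinarith)
    have hinner : |2 * inner ℝ (z θ) (-v)| ≤ 2 * r * max √τ ‖z θ‖ := by
      rw [abs_mul, abs_two, mul_assoc]
      gcongr
      exact (abs_real_inner_le_norm _ _).trans
        (by rw [norm_neg, mul_comm]; gcongr; exact le_max_right _ _)
    calc _ = |heatProfileDtq n τ (‖z θ‖ ^ 2)| * |2 * inner ℝ (z θ) (-v)| := by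
          rw [Real.norm_eq_abs, abs_mul]
      _ ≤ C / max √τ ‖z θ‖ ^ (n + 3 + 1) * (2 * r * max √τ ‖z θ‖) := by
          gcongr
          exact hDtq τ hτ _ (norm_nonneg _)
      _ = 2 * r * C / max √τ ‖z θ‖ ^ (n + 3) := by
          have : 0 < max √τ ‖z θ‖ := by linarith
          field_simp
          ring
      _ ≤ 2 ^ (n + 3) * (2 * r * C) / δ ^ (n + 3) :=
          div_pow_le_of_half_le (by positivity) (by linarith) hρ _
      _ = 2 ^ (n + 4) * C * r / δ ^ (n + 3) := by ring
  have hmvt := norm_image_sub_le_of_norm_deriv_le_segment'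
    (fun θ hθ => (hf θ hθ).hasDerivWithinAt) (fun θ hθ => hf' θ (Ico_subset_Icc_self hθ))
    1 ⟨zero_le_one, le_rfl⟩
  simpa [z, v] using hmvt

lemma exists_abs_heatProfileDt_sub_le_of_mem_pball : ∃ C > 0, ∀ (t : ℝ)
    (x : EuclideanSpace ℝ (Fin n)) (c p : ℝ × EuclideanSpace ℝ (Fin n)) (r : ℝ),
    2 * r ≤ pdist (t, x) c → p ∈ pball c r → c.1 + r ^ 2 ≤ t →
    |heatProfileDt n (t - p.1) (‖x - p.2‖ ^ 2)
        - heatProfileDt n (t - (c.1 - r ^ 2)) (‖x - c.2‖ ^ 2)|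
      ≤ C * r / pdist (t, x) c ^ (n + 3) := by
  obtain ⟨C₁, hC₁, htime⟩ := exists_abs_heatProfileDt_sub_time_le n
  obtain ⟨C₂, hC₂, hspace⟩ := exists_abs_heatProfileDt_sub_space_le n
  refine ⟨C₁ + C₂, by positivity, fun t x c p r hδ hp htc => ?_⟩
  have hp₂ : p.2 ∈ ball c.2 r := (pball_eq_prod c r ▸ hp).2
  calc _ ≤ C₁ * r / pdist (t, x) c ^ (n + 3) + C₂ * r / pdist (t, x) c ^ (n + 3) :=
        (abs_sub_le _ _ _).trans <|
          add_le_add (htime t x c p r hδ hp htc) (hspace t x c p.2 r hδ hp₂ htc)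
    _ = (C₁ + C₂) * r / pdist (t, x) c ^ (n + 3) := by ring

end Estimates

section Integrals

variable {α : Type*} [MeasurableSpace α] {μ : Measure α} {s : Set α} {k a : α → ℝ} {M : ℝ}

lemma integrableOn_mul_and_abs_setIntegral_le (hs : MeasurableSet s)
    (hk : AEStronglyMeasurable k (μ.restrict s)) (ha : Integrable a μ) (ha₁ : ∫ x, |a x| ∂μ ≤ 1)
    (hM : 0 ≤ M) (hkM : ∀ x ∈ s, a x ≠ 0 → |k x| ≤ M) :
    IntegrableOn (fun x => k x * a x) s μ ∧ |∫ x in s, k x * a x ∂μ| ≤ M := by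
  have hbound : ∀ᵐ x ∂μ.restrict s, ‖k x * a x‖ ≤ M * |a x| :=
    (ae_restrict_iff' hs).2 <| ae_of_all _ fun x hx => by
      rw [Real.norm_eq_abs, abs_mul]
      rcases eq_or_ne (a x) 0 with h | h
      · simp [h]
      · exact mul_le_mul_of_nonneg_right (hkM x hx h) (abs_nonneg _)
  have hMa : Integrable (fun x => M * |a x|) (μ.restrict s) := (ha.abs.const_mul M).restrict
  refine ⟨hMa.mono' (hk.mul ha.1.restrict) hbound, ?_⟩
  calc |∫ x in s, k x * a x ∂μ| ≤ ∫ x in s, M * |a x| ∂μ := norm_integral_le_of_norm_le hMa hbound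
    _ = M * ∫ x in s, |a x| ∂μ := integral_const_mul M _
    _ ≤ M * 1 := by
        gcongr
        exact (setIntegral_le_integral ha.abs (ae_of_all _ fun x => abs_nonneg _)).trans ha₁
    _ = M := mul_one M

lemma integrableOn_mul_and_abs_setIntegral_le_of_setIntegral_eq_zero (hs : MeasurableSet s)
    (hk : AEStronglyMeasurable k (μ.restrict s)) (ha : Integrable a μ) (ha₁ : ∫ x, |a x| ∂μ ≤ 1)
    (ha₀ : ∫ x in s, a x ∂μ = 0) (κ : ℝ) (hM : 0 ≤ M) (hkM : ∀ x ∈ s, a x ≠ 0 → |k x - κ| ≤ M) :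
    IntegrableOn (fun x => k x * a x) s μ ∧ |∫ x in s, k x * a x ∂μ| ≤ M := by
  obtain ⟨hint, hbound⟩ := integrableOn_mul_and_abs_setIntegral_le (k := fun x => k x - κ) hs
    (hk.sub aestronglyMeasurable_const) ha ha₁ hM hkM
  have hκa : IntegrableOn (fun x => κ * a x) s μ := (ha.const_mul κ).integrableOn
  have hka : IntegrableOn (fun x => k x * a x) s μ :=
    (hint.add hκa).congr_fun (fun x _ => by simp only [Pi.add_apply]; ring) hs
  have hcancel : ∫ x in s, k x * a x ∂μ = ∫ x in s, (k x - κ) * a x ∂μ := by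
    simp_rw [sub_mul]
    rw [integral_sub hka hκa, integral_const_mul, ha₀, mul_zero, sub_zero]
  exact ⟨hka, hcancel ▸ hbound⟩

end Integrals

lemma exists_abs_setIntegral_deriv_heatKernel_mul_atom_le (n : ℕ) : ∃ C > 0,
    ∀ (a : ℝ × EuclideanSpace ℝ (Fin n) → ℝ) (c : ℝ × EuclideanSpace ℝ (Fin n)) (r : ℝ),
    IsAtom1Inf n a c r → ∀ (t : ℝ) (x : EuclideanSpace ℝ (Fin n)), 0 < t →
      2 * r ≤ pdist (t, x) c →
      IntegrableOn (fun q => deriv (fun τ => heatKernel n τ (x - q.2)) (t - q.1) * a q)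
        (Ioo 0 t ×ˢ univ) ∧
      |∫ q in Ioo 0 t ×ˢ univ, deriv (fun τ => heatKernel n τ (x - q.2)) (t - q.1) * a q|
        ≤ C * r / pdist (t, x) c ^ (n + 3) := by
  obtain ⟨C₁, hC₁, hsize⟩ := exists_abs_heatProfileDt_le_of_mem_pball n
  obtain ⟨C₂, hC₂, hsmooth⟩ := exists_abs_heatProfileDt_sub_le_of_mem_pball n
  refine ⟨C₁ + C₂, by positivity, fun a c r ha t x ht hδ => ?_⟩
  have ha₁ := ha.integral_abs_le_one
  obtain ⟨hr, hsupp, hQX, hint, hmean, -⟩ := ha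
  set R := Ioo 0 t ×ˢ (univ : Set (EuclideanSpace ℝ (Fin n)))
  have hR : MeasurableSet R := measurableSet_Ioo.prod MeasurableSet.univ
  set k := fun q : ℝ × EuclideanSpace ℝ (Fin n) => heatProfileDt n (t - q.1) (‖x - q.2‖ ^ 2)
  have hk : AEStronglyMeasurable k (volume.restrict R) :=
    (measurable_heatProfileDt.comp (f := fun q : ℝ × EuclideanSpace ℝ (Fin n) =>
      (t - q.1, ‖x - q.2‖ ^ 2)) (by fun_prop)).aestronglyMeasurable
  have hEq : EqOn (fun q => deriv (fun τ => heatKernel n τ (x - q.2)) (t - q.1) * a q)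
      (fun q => k q * a q) R := fun q hq => by
    simp only [k, deriv_heatKernel _ (sub_pos.2 hq.1.2)]
  set δ := pdist (t, x) c
  have hδ0 : 0 < δ := by linarith
  have hM : 0 ≤ (C₁ + C₂) * r / δ ^ (n + 3) := div_nonneg (by positivity) (pow_pos hδ0 _).le
  have hCM : ∀ C ≤ C₁ + C₂, C * r / δ ^ (n + 3) ≤ (C₁ + C₂) * r / δ ^ (n + 3) :=
    fun C hC => by gcongr
  suffices IntegrableOn (fun q => k q * a q) R ∧
      |∫ q in R, k q * a q| ≤ (C₁ + C₂) * r / δ ^ (n + 3) by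
    rw [setIntegral_congr_fun hR hEq]
    exact ⟨this.1.congr_fun hEq.symm hR, this.2⟩
  rcases lt_or_ge t (c.1 + r ^ 2) with htc | htc
  · refine integrableOn_mul_and_abs_setIntegral_le hR hk hint ha₁ hM fun q hq hq0 => ?_
    exact (hsize t x c q r hδ (hsupp hq0) hq.1.2 htc).trans (hCM _ (by linarith))
  · have hsuppR : ∀ q, a q ≠ 0 → q ∈ R := fun q hq =>
      ⟨⟨hQX (hsupp hq), by linarith [((pball_eq_prod c r ▸ hsupp hq).1).2]⟩, mem_univ _⟩
    have hmeanR : ∫ q in R, a q = 0 := by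
      rw [setIntegral_eq_integral_of_forall_compl_eq_zero fun q hq => ?_, hmean]
      by_contra h
      exact hq (hsuppR q h)
    refine integrableOn_mul_and_abs_setIntegral_le_of_setIntegral_eq_zero hR hk hint ha₁ hmeanR
      (heatProfileDt n (t - (c.1 - r ^ 2)) (‖x - c.2‖ ^ 2)) hM fun q _ hq0 => ?_
    exact (hsmooth t x c q r hδ (hsupp hq0) htc).trans (hCM _ (by linarith))

theorem stmt17_general (n : ℕ) :
    ∃ C α : ℝ, 0 < C ∧ 0 < α ∧
      ∀ (a : ℝ × EuclideanSpace ℝ (Fin n) → ℝ)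
        (c : ℝ × EuclideanSpace ℝ (Fin n)) (r : ℝ),
        IsAtom1Inf n a c r →
        ∀ j : ℕ, 2 ≤ j →
        ∀ (t : ℝ) (x : EuclideanSpace ℝ (Fin n)), (t, x) ∈ Xset n →
          (2 : ℝ) ^ j * r ≤ pdist (t, x) c → pdist (t, x) c < 2 ^ (j + 1) * r →
          IntegrableOn
            (fun q : ℝ × EuclideanSpace ℝ (Fin n) =>
              deriv (fun τ => heatKernel n τ (x - q.2)) (t - q.1) * a q)
            (Set.Ioo (0 : ℝ) t ×ˢ (Set.univ : Set (EuclideanSpace ℝ (Fin n)))) volume ∧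
          |∫ q in Set.Ioo (0 : ℝ) t ×ˢ (Set.univ : Set (EuclideanSpace ℝ (Fin n))),
              deriv (fun τ => heatKernel n τ (x - q.2)) (t - q.1) * a q| ≤
            C * (2 : ℝ) ^ (-(j : ℝ) * α) * ((2 : ℝ) ^ j * r) ^ (-((n : ℝ) + 2)) := by
  obtain ⟨C, hC, hatom⟩ := exists_abs_setIntegral_deriv_heatKernel_mul_atom_le n
  refine ⟨C, 1, hC, one_pos, fun a c r ha j hj t x ht hδ _ => ?_⟩
  have hr : 0 < r := ha.1
  have h2j : (2 : ℝ) ≤ 2 ^ j := le_self_pow₀ one_le_two (by omega)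
  obtain ⟨hint, hbound⟩ := hatom a c r ha t x ht (le_trans (by gcongr) hδ)
  refine ⟨hint, hbound.trans ?_⟩
  calc C * r / pdist (t, x) c ^ (n + 3) ≤ C * r / (2 ^ j * r) ^ (n + 3) := by gcongr
    _ = C * (2 : ℝ) ^ (-(j : ℝ) * 1) * ((2 : ℝ) ^ j * r) ^ (-((n : ℝ) + 2)) := by
        rw [mul_one, Real.rpow_neg zero_le_two, Real.rpow_natCast, ← Nat.cast_ofNat (R := ℝ),
          ← Nat.cast_add, Real.rpow_neg (by positivity), Real.rpow_natCast]
        field_simp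
        ring

/-- there are `C, α > 0` depending only on `n` such that for every `(1,∞)`-atom
`a` supported in `Q = B̃((t₀,x₀),r) ⊆ X`, every `j ≥ 2` and every `(t,x) ∈ X` with
`2^j r ≤ d̃((t,x),(t₀,x₀)) < 2^{j+1} r`, the integral defining `Ta(t,x)` converges
absolutely and `|Ta(t,x)| ≤ C 2^{−jα} (2^j r)^{−(n+2)}`. -/
theorem stmt17 (n : ℕ) (hn : 1 ≤ n) :
    ∃ C α : ℝ, 0 < C ∧ 0 < α ∧
      ∀ (a : ℝ × EuclideanSpace ℝ (Fin n) → ℝ)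
        (c : ℝ × EuclideanSpace ℝ (Fin n)) (r : ℝ),
        IsAtom1Inf n a c r →
        ∀ j : ℕ, 2 ≤ j →
        ∀ (t : ℝ) (x : EuclideanSpace ℝ (Fin n)), (t, x) ∈ Xset n →
          (2 : ℝ) ^ j * r ≤ pdist (t, x) c → pdist (t, x) c < 2 ^ (j + 1) * r →
          IntegrableOn
            (fun q : ℝ × EuclideanSpace ℝ (Fin n) =>
              deriv (fun τ => heatKernel n τ (x - q.2)) (t - q.1) * a q)
            (Set.Ioo (0 : ℝ) t ×ˢ (Set.univ : Set (EuclideanSpace ℝ (Fin n)))) volume ∧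
          |∫ q in Set.Ioo (0 : ℝ) t ×ˢ (Set.univ : Set (EuclideanSpace ℝ (Fin n))),
              deriv (fun τ => heatKernel n τ (x - q.2)) (t - q.1) * a q| ≤
            C * (2 : ℝ) ^ (-(j : ℝ) * α) * ((2 : ℝ) ^ j * r) ^ (-((n : ℝ) + 2)) :=
  stmt17_general n
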